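/- arXiv:1504.06647 — 6 statements merged into one kernel-verified Lean document; each statement's English description precedes it below -/
import Mathlib

section
/- If x is a prefix of a word w, y is a suffix of w, |x| + |y| ≥ |w| + p, and p is a period of both x and y, then p is a period of w. -/
variable {α : Type*}

/-- The subword of `w` of length `len` starting at 0-indexed position `i`. -/
def subword (w : List α) (i len : ℕ) : List α := (w.drop i).take len

/-- `u` occurs in `w` at 0-indexed position `i`. -/
def OccursAt (u w : List α) (i : ℕ) : Prop :=
  i + u.length ≤ w.length ∧ subword w i u.length = u

/-- `p` is a period of `w`: `w[i] = w[i+p]` whenever both positions are in range. -/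
def HasPeriod (w : List α) (p : ℕ) : Prop :=
  0 < p ∧ ∀ i : ℕ, i + p < w.length → w[i]? = w[i + p]?

/-- `per w`: the length of the shortest period of `w`. -/
noncomputable def minPeriod (w : List α) : ℕ := sInf {p | HasPeriod w p}

namespace List

theorem IsPrefix.getElem?_eq {x w : List α} (h : x <+: w) {i : ℕ} (hi : i < x.length) :
    w[i]? = x[i]? := by
  obtain ⟨t, rfl⟩ := h
  exact getElem?_append_left hi

theorem IsSuffix.getElem?_length_sub_add {y w : List α} (h : y <:+ w) (j : ℕ) :
    w[w.length - y.length + j]? = y[j]? := by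
  obtain ⟨s, rfl⟩ := h
  rw [getElem?_append_right (by simp)]
  simp

/-- Since the overlap of `x` and `y` has length at least `p`, each pair of positions `i, i + p`
of `w` lies inside `x` or inside `y`. -/
theorem HasPeriod.of_isPrefix_of_isSuffix {w x y : List α} {p : ℕ} (hx : x <+: w) (hy : y <:+ w)
    (hlen : w.length + p ≤ x.length + y.length) (hpx : x.HasPeriod p) (hpy : y.HasPeriod p) :
    w.HasPeriod p := by
  rw [hasPeriod_iff_getElem?] at hpx hpy ⊢
  intro i hi
  by_cases hix : i + p < x.length
  · rw [hx.getElem?_eq (by omega), hx.getElem?_eq hix, hpx i (by omega)]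
  · obtain ⟨j, rfl⟩ : ∃ j, i = w.length - y.length + j :=
      ⟨i - (w.length - y.length), by omega⟩
    rw [add_assoc, hy.getElem?_length_sub_add, hy.getElem?_length_sub_add]
    exact hpy j (by omega)

end List

theorem hasPeriod_iff_pos_and_hasPeriod {w : List α} {p : ℕ} :
    HasPeriod w p ↔ 0 < p ∧ w.HasPeriod p := by
  rw [HasPeriod, List.hasPeriod_iff_getElem?]
  refine and_congr_right fun _ => forall_congr' fun i => ?_
  exact ⟨fun h hi => h (by omega), fun h hi => h (by omega)⟩

/-- If `x` is a prefix of `w`, `y` is a suffix of `w`, `|x| + |y| ≥ |w| + p`,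
and `p` is a period of both `x` and `y`, then `p` is a period of `w`. -/
theorem statement_0 (w x y : List α) (p : ℕ)
    (hx : x <+: w) (hy : y <:+ w)
    (hlen : w.length + p ≤ x.length + y.length)
    (hpx : HasPeriod x p) (hpy : HasPeriod y p) :
    HasPeriod w p := by
  rw [hasPeriod_iff_pos_and_hasPeriod] at hpx hpy ⊢
  exact ⟨hpx.1, .of_isPrefix_of_isSuffix hx hy hlen hpx.2 hpy.2⟩
end

section
/- (Fine–Wilf periodicity lemma) If p and q are both periods of a word w and p + q ≤ |w|, then gcd(p, q) is also a period of w. -/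
variable {α : Type*}

/-!
Fine–Wilf by Euclid's algorithm: if `q < p` are periods and `p + q ≤ |w|`, then `p - q` is a
period too, and the pair `(p - q, q)` still fits in `w` and has the same gcd. Subtracting the
smaller period from the larger one thus descends to `(gcd p q, gcd p q)`.
-/

theorem HasPeriod.sub {w : List α} {p q : ℕ} (hp : HasPeriod w p) (hq : HasPeriod w q)
    (hqp : q < p) (hlen : p + q ≤ w.length) : HasPeriod w (p - q) := by
  refine ⟨Nat.sub_pos_of_lt hqp, fun i hi => ?_⟩
  by_cases hip : i + p < w.length
  · calc w[i]? = w[i + p]? := hp.2 i hip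
      _ = w[i + (p - q) + q]? := by rw [Nat.add_assoc, Nat.sub_add_cancel hqp.le]
      _ = w[i + (p - q)]? := (hq.2 _ (by omega)).symm
  · -- `i + p ≥ |w| ≥ p + q`, so one can step back by `q` first
    calc w[i]? = w[i - q + q]? := by rw [Nat.sub_add_cancel (by omega)]
      _ = w[i - q]? := (hq.2 _ (by omega)).symm
      _ = w[i - q + p]? := hp.2 _ (by omega)
      _ = w[i + (p - q)]? := by congr 1; omega

theorem HasPeriod.gcd {w : List α} {p q : ℕ} (hp : HasPeriod w p) (hq : HasPeriod w q)
    (hlen : p + q ≤ w.length) : HasPeriod w (Nat.gcd p q) := by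
  induction hs : p + q using Nat.strong_induction_on generalizing p q with
  | _ s ih =>
    wlog hqp : q ≤ p generalizing p q
    · rw [Nat.gcd_comm]
      exact this hq hp (by omega) (by omega) (by omega)
    rcases hqp.eq_or_lt with rfl | hlt
    · rwa [Nat.gcd_self]
    · rw [← Nat.gcd_sub_self_left hqp]
      have hq0 := hq.1
      exact ih p (by omega) (hp.sub hq hlt hlen) hq (by omega) (Nat.sub_add_cancel hqp)

/-- Fine–Wilf periodicity lemma: if `p` and `q` are periods of `w` and
`p + q ≤ |w|`, then `gcd p q` is also a period of `w`. -/
theorem statement_1 (w : List α) (p q : ℕ)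
    (hp : HasPeriod w p) (hq : HasPeriod w q) (hpq : p + q ≤ w.length) :
    HasPeriod w (Nat.gcd p q) :=
  hp.gcd hq hpq
end

section
/- Let w be a word with shortest period per(w) ≤ |w|/2, let v = w[1..⌈|w|/2⌉], and let p be the starting position of the second occurrence of v in w (i.e., the smallest position p > 1 such that v occurs at position p in w). Then per(w) = p - 1. -/
variable {α : Type*}

/-!
Write `p = per w` and `m = ⌈|w|/2⌉`. Since `2p ≤ |w|`, the prefix of length `m` also occurs
at `p`, so `q ≤ p`. Conversely, the occurrence at `q` gives `w[i] = w[i+q]` for `i < m`, and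
since `p ≤ m` every larger `i` is pushed back below `m` by the period `p`; so `q` is a period
and `p ≤ q`.
-/

theorem hasPeriod_length_succ (w : List α) : HasPeriod w (w.length + 1) :=
  ⟨Nat.succ_pos _, fun _ hi => absurd hi (by omega)⟩

theorem hasPeriod_minPeriod (w : List α) : HasPeriod w (minPeriod w) :=
  Nat.sInf_mem (s := {p | HasPeriod w p}) ⟨_, hasPeriod_length_succ w⟩

theorem minPeriod_le {w : List α} {p : ℕ} (hp : HasPeriod w p) : minPeriod w ≤ p :=
  Nat.sInf_le hp

theorem occursAt_take_iff {w : List α} {m q : ℕ} (hm : m ≤ w.length) :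
    OccursAt (w.take m) w q ↔ q + m ≤ w.length ∧ ∀ i < m, w[i]? = w[i + q]? := by
  have hlen : (w.take m).length = m := List.length_take_of_le hm
  rw [OccursAt, subword, hlen]
  refine and_congr_right fun _ => ⟨fun h i hi => ?_, fun h => ?_⟩
  · have := congrArg (·[i]?) h
    simp only [List.getElem?_take_of_lt hi, List.getElem?_drop] at this
    rw [← this, Nat.add_comm]
  · refine List.ext_getElem? fun i => ?_
    by_cases hi : i < m
    · rw [List.getElem?_take_of_lt hi, List.getElem?_take_of_lt hi, List.getElem?_drop,
        Nat.add_comm, h i hi]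
    · simp [hi]

theorem HasPeriod.occursAt_take {w : List α} {p m : ℕ} (hp : HasPeriod w p)
    (hpm : p + m ≤ w.length) : OccursAt (w.take m) w p :=
  (occursAt_take_iff (by omega)).2 ⟨hpm, fun i _ => hp.2 i (by omega)⟩

theorem HasPeriod.of_getElem?_eq_add {w : List α} {p q m : ℕ} (hp : HasPeriod w p)
    (hpm : p ≤ m) (hq : 0 < q) (hshift : ∀ i < m, w[i]? = w[i + q]?) : HasPeriod w q := by
  refine ⟨hq, fun i => ?_⟩
  induction i using Nat.strong_induction_on with
  | _ i ih =>
    intro hi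
    by_cases him : i < m
    · exact hshift i him
    · have hpi : p ≤ i := by omega
      calc w[i]? = w[i - p]? := by rw [hp.2 (i - p) (by omega), Nat.sub_add_cancel hpi]
        _ = w[i - p + q]? := ih (i - p) (by have := hp.1; omega) (by omega)
        _ = w[i + q]? := by rw [hp.2 (i - p + q) (by omega), show i - p + q + p = i + q by omega]

theorem statement_2_general (w : List α) (q : ℕ)
    (hper : 2 * minPeriod w ≤ w.length)
    (hq : 1 ≤ q)
    (hocc : OccursAt (w.take ((w.length + 1) / 2)) w q)
    (hmin : ∀ q', 1 ≤ q' → q' < q → ¬ OccursAt (w.take ((w.length + 1) / 2)) w q') :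
    minPeriod w = q := by
  have hp := hasPeriod_minPeriod w
  have hqp : q ≤ minPeriod w :=
    not_lt.1 fun h => hmin _ hp.1 h (hp.occursAt_take (by omega))
  obtain ⟨-, hshift⟩ := (occursAt_take_iff (by omega)).1 hocc
  exact le_antisymm (minPeriod_le (hp.of_getElem?_eq_add (by omega) hq hshift)) hqp

/-- If `per w ≤ |w|/2`, `v` is the prefix of `w` of length `⌈|w|/2⌉`, and `q` is
the 0-indexed position of the second occurrence of `v` in `w` (the smallest
position `q ≥ 1` where `v` occurs), then `per w = q`. -/
theorem statement_2 (w : List α) (q : ℕ)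
    (hw : 0 < w.length)
    (hper : 2 * minPeriod w ≤ w.length)
    (hq : 1 ≤ q)
    (hocc : OccursAt (w.take ((w.length + 1) / 2)) w q)
    (hmin : ∀ q', 1 ≤ q' → q' < q → ¬ OccursAt (w.take ((w.length + 1) / 2)) w q') :
    minPeriod w = q :=
  statement_2_general w q hper hq hocc hmin
end

section
/- Let w = g₁g₂⋯g_a be a c-optimal factorization of w into a phrases, and suppose the LZ77 factorization of w consists of z phrases. Then a ≤ c·z. -/
/-!
Send each phrase `g i` of the `c`-optimal factorization to the LZ77 phrase containing its first
position. If `c + 1` phrases `g m, …, g (m + c)` start inside one LZ77 phrase `f k`, then `f k`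
has length at least two, so it is a previous fragment, and so is its subfragment
`g m ⋯ g (m + c - 1)`, contradicting `c`-optimality. Hence every LZ77 phrase receives at most
`c` phrases of `g`, and `a ≤ c · z`.
-/

variable {α : Type*}

/-- The fragment of `w` of length `len` starting at 0-indexed position `i`
is a previous fragment: the corresponding word occurs earlier in `w`. -/
def PrevFrag (w : List α) (i len : ℕ) : Prop :=
  0 < len ∧ i + len ≤ w.length ∧ ∃ i' < i, OccursAt (subword w i len) w i'

/-- The letter at position `i` of `w` does not occur earlier in `w`. -/
def FreshLetter (w : List α) (i : ℕ) : Prop :=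
  i < w.length ∧ ∀ i' < i, w[i']? ≠ w[i]?

/-- A phrase is a previous fragment or a single letter not occurring before. -/
def IsPhrase (w : List α) (i len : ℕ) : Prop :=
  PrevFrag w i len ∨ (len = 1 ∧ FreshLetter w i)

/-- `b 0 = 0 < b 1 < ... < b a = |w|` are the boundaries of a factorization of `w`
into `a` pieces; piece `k` starts at `b k` and has length `b (k+1) - b k`. -/
def IsFactorization (w : List α) (a : ℕ) (b : ℕ → ℕ) : Prop :=
  b 0 = 0 ∧ b a = w.length ∧ ∀ k < a, b k < b (k + 1)

/-- A factorization of `w` into `a` phrases. -/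
def IsPhraseFactorization (w : List α) (a : ℕ) (b : ℕ → ℕ) : Prop :=
  IsFactorization w a b ∧ ∀ k < a, IsPhrase w (b k) (b (k + 1) - b k)

/-- The LZ77 (greedy) factorization of `w` into `z` phrases: each phrase is the
longest possible phrase starting at its position. -/
def IsLZ77 (w : List α) (z : ℕ) (b : ℕ → ℕ) : Prop :=
  IsPhraseFactorization w z b ∧
    ∀ k < z, ∀ len, b (k + 1) - b k < len → b k + len ≤ w.length →
      ¬ IsPhrase w (b k) len

lemma subword_length_of_le {w : List α} {i len : ℕ} (h : i + len ≤ w.length) :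
    (subword w i len).length = len := by
  simp only [subword, List.length_take, List.length_drop]
  omega

lemma subword_add {w : List α} {i d L n : ℕ} (h : d + L ≤ n) :
    subword w (i + d) L = subword (subword w i n) d L := by
  simp only [subword, List.drop_take, List.drop_drop, List.take_take]
  congr 1
  omega

lemma PrevFrag.of_subfragment {w : List α} {i n j L : ℕ} (h : PrevFrag w i n) (hL : 0 < L)
    (hij : i ≤ j) (hjL : j + L ≤ i + n) : PrevFrag w j L := by
  obtain ⟨-, hend, i', hi', hocc, hsub⟩ := h
  have hlen : (subword w i n).length = n := subword_length_of_le hend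
  rw [hlen] at hocc hsub
  refine ⟨hL, by omega, i' + (j - i), by omega, ?_⟩
  rw [OccursAt, subword_length_of_le (by omega : j + L ≤ w.length)]
  refine ⟨by omega, ?_⟩
  have hj : j = i + (j - i) := by omega
  rw [subword_add (by omega : j - i + L ≤ n), hsub, ← subword_add (by omega), ← hj]

lemma IsPhrase.prevFrag_of_one_lt {w : List α} {i n : ℕ} (h : IsPhrase w i n) (hn : 1 < n) :
    PrevFrag w i n :=
  h.resolve_right fun h1 => by omega

namespace IsFactorization

variable {w : List α} {a : ℕ} {b : ℕ → ℕ}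

lemma strictMonoOn (h : IsFactorization w a b) : StrictMonoOn b (Set.Iic a) :=
  strictMonoOn_Iic_of_lt_succ fun m hm => by simpa using h.2.2 m hm

lemma lt_of_lt {j k : ℕ} (h : IsFactorization w a b) (hjk : j < k) (hk : k ≤ a) : b j < b k :=
  h.strictMonoOn (Set.mem_Iic.2 (by omega)) (Set.mem_Iic.2 hk) hjk

lemma le_of_le {j k : ℕ} (h : IsFactorization w a b) (hjk : j ≤ k) (hk : k ≤ a) : b j ≤ b k :=
  h.strictMonoOn.monotoneOn (Set.mem_Iic.2 (by omega)) (Set.mem_Iic.2 hk) hjk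

end IsFactorization

def pieceIndex (a : ℕ) (b : ℕ → ℕ) (p : ℕ) : ℕ := Nat.findGreatest (fun k => b k ≤ p) a

lemma IsFactorization.pieceIndex_spec {w : List α} {a : ℕ} {b : ℕ → ℕ}
    (h : IsFactorization w a b) {p : ℕ} (hp : p < w.length) :
    pieceIndex a b p < a ∧ b (pieceIndex a b p) ≤ p ∧ p < b (pieceIndex a b p + 1) := by
  have hstart : b (pieceIndex a b p) ≤ p :=
    Nat.findGreatest_spec (P := fun k => b k ≤ p) (Nat.zero_le a) (by rw [h.1]; omega)
  have hlt : pieceIndex a b p < a := by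
    refine lt_of_le_of_ne (Nat.findGreatest_le a) fun heq => ?_
    rw [heq, h.2.1] at hstart
    omega
  refine ⟨hlt, hstart, not_le.1 ?_⟩
  exact Nat.findGreatest_is_greatest (P := fun k => b k ≤ p) (Nat.lt_succ_self _) hlt

lemma Finset.card_le_of_forall_lt_add {s : Finset ℕ} {c : ℕ}
    (h : ∀ x ∈ s, ∀ y ∈ s, y < x + c) : s.card ≤ c := by
  rcases s.eq_empty_or_nonempty with rfl | hs
  · simp
  have hsub : s ⊆ Finset.Ico (s.min' hs) (s.min' hs + c) := fun y hy =>
    Finset.mem_Ico.2 ⟨s.min'_le y hy, h _ (s.min'_mem hs) y hy⟩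
  simpa using Finset.card_le_card hsub

lemma lt_add_of_start_mem_phrase {w : List α} {a c z : ℕ} {g f : ℕ → ℕ} (hc : 0 < c)
    (hg : IsFactorization w a g)
    (hopt : ∀ i, i + c ≤ a → ¬ PrevFrag w (g i) (g (i + c) - g i))
    (hf : IsPhraseFactorization w z f) {k m j : ℕ} (hk : k < z) (hj : j < a)
    (hm : f k ≤ g m) (hjk : g j < f (k + 1)) : j < m + c := by
  by_contra! hmj
  have hgm : g m < g (m + c) := hg.lt_of_lt (by omega) (by omega)
  have hgj : g (m + c) ≤ g j := hg.le_of_le hmj hj.le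
  have hprev : PrevFrag w (f k) (f (k + 1) - f k) :=
    (hf.2 k hk).prevFrag_of_one_lt (by omega)
  exact hopt m (by omega) (hprev.of_subfragment (by omega) hm (by omega))

/-- If `w = g₁⋯g_a` is a `c`-optimal factorization into phrases (no `c` consecutive
phrases concatenate to a previous fragment) and the LZ77 factorization of `w` has
`z` phrases, then `a ≤ c · z`. -/
theorem statement_9 (w : List α) (a c z : ℕ) (g f : ℕ → ℕ)
    (hc : 0 < c)
    (hg : IsPhraseFactorization w a g)
    (hopt : ∀ i, i + c ≤ a → ¬ PrevFrag w (g i) (g (i + c) - g i))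
    (hlz : IsLZ77 w z f) :
    a ≤ c * z := by
  have hf := hlz.1
  set φ : ℕ → ℕ := fun i => pieceIndex z f (g i)
  have hφ : ∀ i < a, φ i < z ∧ f (φ i) ≤ g i ∧ g i < f (φ i + 1) := fun i hi =>
    hf.1.pieceIndex_spec (hg.1.2.1 ▸ hg.1.lt_of_lt hi le_rfl)
  have hfiber : ∀ k ∈ Finset.range z, ((Finset.range a).filter (φ · = k)).card ≤ c := by
    refine fun k hk => Finset.card_le_of_forall_lt_add fun m hm j hj => ?_
    simp only [Finset.mem_filter, Finset.mem_range] at hk hm hj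
    refine lt_add_of_start_mem_phrase hc hg.1 hopt hf hk hj.1 ?_ ?_
    · simpa [hm.2] using (hφ m hm.1).2.1
    · simpa [hj.2] using (hφ j hj.1).2.2
  simpa using Finset.card_le_mul_card_image_of_maps_to
    (fun i hi => Finset.mem_range.2 (hφ i (Finset.mem_range.1 hi)).1) c hfiber
end

section
/- Consider a full binary tree over a word w of length n = 2^k, where the node at level i and index t corresponds to the block w[(t-1)·n/2^i + 1 .. t·n/2^i]. Prune the tree at nodes whose blocks are previous fragments or single fresh letters; call a pair of sibling leaves a cherry. Then the block induced by the parent of any cherry is not a previous fragment, and hence the number of cherries is at most z, the number of phrases in the LZ77 factorization of w. -/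
variable {α : Type*}

/-- The node at level `i`, index `t` (0-indexed, `t < 2^i`) of the binary tree over a
word of length `2^k` is a leaf iff its block (of length `2^(k-i)`) is a phrase. -/
def TreeLeaf (w : List α) (k i t : ℕ) : Prop :=
  IsPhrase w (t * 2 ^ (k - i)) (2 ^ (k - i))

/-- A node is alive (explored) iff none of its proper ancestors below the root is a leaf. -/
def TreeAlive (w : List α) (k i t : ℕ) : Prop :=
  ∀ i', 1 ≤ i' → i' < i → ¬ TreeLeaf w k i' (t / 2 ^ (i - i'))

/-- A cherry at the node `(i, t)`: both its children are alive leaves. -/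
def TreeCherry (w : List α) (k i t : ℕ) : Prop :=
  TreeAlive w k (i + 1) (2 * t) ∧
    TreeLeaf w k (i + 1) (2 * t) ∧ TreeLeaf w k (i + 1) (2 * t + 1)

/-! A cherry's parent is an explored node that is not itself a leaf, so its block is not a
previous fragment; since every LZ77 phrase is a previous fragment or a single letter, such a
block cannot lie inside one phrase and therefore contains the end of some phrase. The parent
blocks of two distinct cherries are disjoint: dyadic blocks that meet are nested, and a
strictly deeper cherry would lie below a leaf of the shallower one. Sending each cherry to a
phrase ending in its parent block is thus injective. -/

section

variable {w : List α}

lemma subword_length {i len : ℕ} (h : i + len ≤ w.length) : (subword w i len).length = len := by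
  simp only [subword, List.length_take, List.length_drop]
  omega

lemma take_drop_subword {s d L L' : ℕ} (h : d + L' ≤ L) :
    ((subword w s L).drop d).take L' = subword w (s + d) L' := by
  simp only [subword, List.drop_take, List.take_take, List.drop_drop]
  rw [min_eq_left (by omega)]

lemma PrevFrag.mono {s L s' L' : ℕ} (h : PrevFrag w s L) (hs : s ≤ s') (hend : s' + L' ≤ s + L)
    (hL' : 0 < L') : PrevFrag w s' L' := by
  obtain ⟨-, hsL, i, hi, -, hocc⟩ := h
  rw [subword_length hsL] at hocc
  refine ⟨hL', by omega, i + (s' - s), by omega, ?_⟩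
  rw [OccursAt, subword_length (by omega)]
  refine ⟨by omega, ?_⟩
  calc subword w (i + (s' - s)) L'
      = ((subword w i L).drop (s' - s)).take L' := (take_drop_subword (by omega)).symm
    _ = subword w (s + (s' - s)) L' := by rw [hocc, take_drop_subword (by omega)]
    _ = subword w s' L' := by rw [Nat.add_sub_cancel' hs]

lemma IsPhrase.add_le_length {i len : ℕ} (h : IsPhrase w i len) : i + len ≤ w.length := by
  rcases h with h | ⟨rfl, h⟩
  · exact h.2.1
  · exact h.1

lemma IsFactorization.exists_piece_mem {a : ℕ} {b : ℕ → ℕ} (h : IsFactorization w a b) {s : ℕ}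
    (hs : s < w.length) : ∃ j < a, b j ≤ s ∧ s < b (j + 1) := by
  classical
  obtain ⟨hb0, hba, -⟩ := h
  have hex : ∃ m, s < b m := ⟨a, hba ▸ hs⟩
  have hm : Nat.find hex ≠ 0 := fun h0 => by
    have := Nat.find_spec hex
    rw [h0, hb0] at this
    omega
  obtain ⟨j, hj⟩ := Nat.exists_eq_succ_of_ne_zero hm
  have hspec := Nat.find_spec hex
  have hle := Nat.find_min' hex (hba ▸ hs)
  rw [hj] at hspec hle
  exact ⟨j, hle, not_lt.mp (Nat.find_min hex (by omega)), hspec⟩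

lemma IsPhraseFactorization.exists_end_mem_of_not_prevFrag {z : ℕ} {f : ℕ → ℕ}
    (hf : IsPhraseFactorization w z f) {s L : ℕ} (hL : 0 < L) (hsL : s + L ≤ w.length)
    (hnp : ¬ PrevFrag w s L) : ∃ j < z, s < f (j + 1) ∧ f (j + 1) ≤ s + L := by
  obtain ⟨j, hjz, hjs, hsj⟩ := hf.1.exists_piece_mem (s := s) (by omega)
  refine ⟨j, hjz, hsj, not_lt.mp fun hlong => ?_⟩
  rcases hf.2 j hjz with hprev | ⟨hone, -⟩
  · exact hnp (hprev.mono hjs (by omega) hL)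
  · omega

variable {k : ℕ}

lemma TreeCherry.not_prevFrag {i t : ℕ} (hc : TreeCherry w k i t) (ht : t < 2 ^ i) :
    ¬ PrevFrag w (t * 2 ^ (k - i)) (2 ^ (k - i)) := by
  rcases Nat.eq_zero_or_pos i with rfl | hi
  · rintro ⟨-, -, i', hi', -⟩
    simp_all
  · intro hp
    have hparent := hc.1 i hi (Nat.lt_succ_self i)
    rw [Nat.add_sub_cancel_left, pow_one, Nat.mul_div_cancel_left t two_pos] at hparent
    exact hparent (Or.inl hp)

lemma TreeCherry.add_le_length {i t : ℕ} (hc : TreeCherry w k i t) (hik : i + 1 ≤ k) :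
    t * 2 ^ (k - i) + 2 ^ (k - i) ≤ w.length := by
  have hpow : 2 ^ (k - i) = 2 * 2 ^ (k - (i + 1)) := by
    rw [← pow_succ']
    congr 1
    omega
  have := hc.2.2.add_le_length
  rw [hpow]
  linarith

lemma TreeCherry.level_eq_of_ancestor {i t i' t' : ℕ} (hc : TreeCherry w k i t)
    (hc' : TreeCherry w k i' t') (hle : i ≤ i') (hanc : t' / 2 ^ (i' - i) = t) : i = i' := by
  by_contra hne
  have hchild := hc'.1 (i + 1) (by omega) (by omega)
  set u := 2 * t' / 2 ^ (i' + 1 - (i + 1))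
  have hu : u / 2 = t := by
    rw [← hanc, Nat.div_div_eq_div_mul, ← pow_succ, Nat.add_sub_add_right,
      show i' - i = i' - i - 1 + 1 by omega, pow_succ', Nat.mul_div_mul_left _ _ two_pos]
  rcases (by omega : u = 2 * t ∨ u = 2 * t + 1) with h | h
  · exact hchild (h ▸ hc.2.1)
  · exact hchild (h ▸ hc.2.2)

lemma TreeCherry.eq_of_mem_Ioc {i t i' t' e : ℕ} (hc : TreeCherry w k i t)
    (hc' : TreeCherry w k i' t') (hik : i ≤ k) (hik' : i' ≤ k)
    (he : e ∈ Set.Ioc (t * 2 ^ (k - i)) ((t + 1) * 2 ^ (k - i)))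
    (he' : e ∈ Set.Ioc (t' * 2 ^ (k - i')) ((t' + 1) * 2 ^ (k - i'))) : i = i' ∧ t = t' := by
  wlog hle : i ≤ i' generalizing i t i' t'
  · exact (this hc' hc hik' hik he' he (by omega)).imp Eq.symm Eq.symm
  obtain ⟨hlo, hhi⟩ := he
  obtain ⟨hlo', hhi'⟩ := he'
  have hx : (e - 1) / 2 ^ (k - i) = t := Nat.div_eq_of_lt_le (by omega) (by omega)
  have hx' : (e - 1) / 2 ^ (k - i') = t' := Nat.div_eq_of_lt_le (by omega) (by omega)
  have hanc : t' / 2 ^ (i' - i) = t := by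
    rw [← hx, ← hx', Nat.div_div_eq_div_mul, ← pow_add]
    congr 2
    omega
  obtain rfl := hc.level_eq_of_ancestor hc' hle hanc
  simpa using hanc.symm

end

theorem statement_13_general (w : List α) (k z : ℕ) (f : ℕ → ℕ)
    (hlz : IsLZ77 w z f) :
    (∀ i t, i + 1 ≤ k → t < 2 ^ i → TreeCherry w k i t →
      ¬ PrevFrag w (t * 2 ^ (k - i)) (2 ^ (k - i))) ∧
    ({p : ℕ × ℕ | p.1 + 1 ≤ k ∧ p.2 < 2 ^ p.1 ∧ TreeCherry w k p.1 p.2}.ncard ≤ z) := by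
  refine ⟨fun i t _ ht hc => hc.not_prevFrag ht, ?_⟩
  set S := {p : ℕ × ℕ | p.1 + 1 ≤ k ∧ p.2 < 2 ^ p.1 ∧ TreeCherry w k p.1 p.2}
  have hend : ∀ p : S, ∃ j : Fin z,
      f (j + 1) ∈ Set.Ioc (p.1.2 * 2 ^ (k - p.1.1)) ((p.1.2 + 1) * 2 ^ (k - p.1.1)) := by
    rintro ⟨⟨i, t⟩, hik, ht, hc⟩
    obtain ⟨j, hjz, hj⟩ := hlz.1.exists_end_mem_of_not_prevFrag (by positivity)
      (hc.add_le_length hik) (hc.not_prevFrag ht)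
    exact ⟨⟨j, hjz⟩, by rwa [add_one_mul]⟩
  choose g hg using hend
  have hg_inj : Function.Injective g := by
    rintro ⟨⟨i, t⟩, hik, ht, hc⟩ ⟨⟨i', t'⟩, hik', ht', hc'⟩ hgg
    obtain ⟨rfl, rfl⟩ := hc.eq_of_mem_Ioc hc' (by omega) (by omega)
      (hgg ▸ hg ⟨(i, t), hik, ht, hc⟩) (hg ⟨(i', t'), hik', ht', hc'⟩)
    rfl
  simpa [Nat.card_coe_set_eq] using Nat.card_le_card_of_injective g hg_inj

/-- The block induced by (the parent node of) a cherry is never a previous fragment,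
and the number of cherries is at most `z`, the number of LZ77 phrases. -/
theorem statement_13 (w : List α) (k z : ℕ) (f : ℕ → ℕ)
    (hn : w.length = 2 ^ k) (hlz : IsLZ77 w z f) :
    (∀ i t, i + 1 ≤ k → t < 2 ^ i → TreeCherry w k i t →
      ¬ PrevFrag w (t * 2 ^ (k - i)) (2 ^ (k - i))) ∧
    ({p : ℕ × ℕ | p.1 + 1 ≤ k ∧ p.2 < 2 ^ p.1 ∧ TreeCherry w k p.1 p.2}.ncard ≤ z) :=
  statement_13_general w k z f hlz
end

section
/- Let w = h_ℓ h_{ℓ+1} ⋯ h_r be a sequence of consecutive fragments whose lengths are strictly increasing powers of two (|h_{i+1}| ≥ 2|h_i| and each |h_i| is a power of 2). Partition them greedily into groups: start a group with h_ℓ; append h_i to the active group g_j iff the fragment of length 2|h_i| starting at the start of g_j is a previous fragment; otherwise close g_j and start a new group with h_i. Then each resulting group is a previous fragment (i.e., a valid phrase), and no concatenation of three consecutive groups g_j g_{j+1} g_{j+2} forms a previous fragment. -/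
variable {α : Type*}

/-! A group with at least two phrases ends with some `h_i` and is a prefix of the
previous fragment of length `2|h_i|` starting at the group, because the lengths at least
double, so the group is at most `2|h_i|` long. Three consecutive groups `g_j g_{j+1} g_{j+2}`
contain the first two phrases starting at `g_{j+1}`, of total length more than
`2|h_{G(j+1)}|`; if they formed a previous fragment, so would its prefix of that length,
which is exactly the test that closed `g_j`. -/

lemma OccursAt.take {u w : List α} {i : ℕ} (h : OccursAt u w i) (k : ℕ) :
    OccursAt (u.take k) w i := by
  obtain ⟨hle, heq⟩ := h
  refine ⟨by simp; omega, ?_⟩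
  rw [← heq]
  simp [subword, List.take_take]

lemma subword_take (w : List α) (i : ℕ) {len len' : ℕ} (h : len' ≤ len) :
    (subword w i len).take len' = subword w i len' := by
  simp [subword, List.take_take, Nat.min_eq_left h]

lemma PrevFrag.of_le {w : List α} {i len len' : ℕ} (h : PrevFrag w i len)
    (hpos : 0 < len') (hle : len' ≤ len) : PrevFrag w i len' := by
  obtain ⟨-, hlen, i', hi', hocc⟩ := h
  refine ⟨hpos, by omega, i', hi', ?_⟩
  rw [← subword_take w i hle]
  exact hocc.take len'

lemma two_mul_le_of_lt_of_pow_two {m n : ℕ} (hm : ∃ e, m = 2 ^ e) (hn : ∃ f, n = 2 ^ f)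
    (h : m < n) : 2 * m ≤ n := by
  obtain ⟨e, rfl⟩ := hm
  obtain ⟨f, rfl⟩ := hn
  have hef : e < f := (Nat.pow_lt_pow_iff_right (by norm_num)).mp h
  calc 2 * 2 ^ e = 2 ^ (e + 1) := by ring
    _ ≤ 2 ^ f := Nat.pow_le_pow_right (by norm_num) hef

section Chain

variable {r : ℕ} {s L : ℕ → ℕ} (hcons : ∀ i, i + 1 ≤ r → s (i + 1) = s i + L i)
include hcons

lemma start_mono {a b : ℕ} (hab : a ≤ b) (hbr : b ≤ r) : s a ≤ s b := by
  induction b, hab using Nat.le_induction with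
  | base => rfl
  | succ b _ ih => rw [hcons b hbr]; have := ih (by omega); omega

lemma end_le_start_add_two_mul_last (hdbl : ∀ i, i + 1 < r → 2 * L i ≤ L (i + 1))
    {a b : ℕ} (hab : a ≤ b) (hbr : b < r) : s (b + 1) ≤ s a + 2 * L b := by
  induction b, hab using Nat.le_induction with
  | base => rw [hcons a (by omega)]; omega
  | succ b _ ih =>
    have := ih (by omega)
    have := hdbl b hbr
    rw [hcons (b + 1) hbr]
    omega

lemma isPhrase_group {w : List α} (hdbl : ∀ i, i + 1 < r → 2 * L i ≤ L (i + 1))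
    (hLpos : ∀ i < r, 0 < L i) {a b : ℕ} (hab : a < b) (hbr : b ≤ r)
    (hph : IsPhrase w (s a) (L a))
    (happ : ∀ i, a < i → i < b → PrevFrag w (s a) (2 * L i)) :
    IsPhrase w (s a) (s b - s a) := by
  obtain rfl | hlong := eq_or_lt_of_le (Nat.succ_le_of_lt hab)
  · rwa [hcons a hbr, Nat.add_sub_cancel_left]
  obtain ⟨i, rfl⟩ : ∃ i, b = i + 1 := ⟨b - 1, by omega⟩
  have hpos : 0 < s (i + 1) - s a := by
    have := start_mono hcons (a := a) (b := i) (by omega) (by omega)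
    have := hcons i hbr
    have := hLpos i (by omega)
    omega
  have hshort := end_le_start_add_two_mul_last hcons hdbl (a := a) (b := i) (by omega) (by omega)
  exact Or.inl ((happ i (by omega) (by omega)).of_le hpos (by omega))

lemma not_prevFrag_of_two_phrases {w : List α} {a c d : ℕ} (hac : a ≤ c) (hcd : c + 2 ≤ d)
    (hdr : d ≤ r) (hpos : 0 < L c) (hinc : L c < L (c + 1))
    (hnew : ¬ PrevFrag w (s a) (2 * L c)) :
    ¬ PrevFrag w (s a) (s d - s a) := by
  intro H
  have := start_mono hcons hac (by omega)
  have := start_mono hcons hcd hdr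
  have := hcons c (by omega)
  have : s (c + 2) = s (c + 1) + L (c + 1) := hcons (c + 1) (by omega)
  exact hnew (H.of_le (by omega) (by omega))

end Chain

theorem statement_17_general (w : List α) (r q : ℕ) (s L G : ℕ → ℕ)
    (hcons : ∀ i, i + 1 ≤ r → s (i + 1) = s i + L i)
    (hpow : ∀ i < r, ∃ e, L i = 2 ^ e)
    (hinc : ∀ i, i + 1 < r → L i < L (i + 1))
    (hph : ∀ i < r, IsPhrase w (s i) (L i))
    (hGq : G q = r) (hGinc : ∀ j < q, G j < G (j + 1))
    (happ : ∀ j < q, ∀ i, G j < i → i < G (j + 1) → PrevFrag w (s (G j)) (2 * L i))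
    (hnew : ∀ j, j + 1 < q → ¬ PrevFrag w (s (G j)) (2 * L (G (j + 1)))) :
    (∀ j < q, IsPhrase w (s (G j)) (s (G (j + 1)) - s (G j))) ∧
    (∀ j, j + 3 ≤ q → ¬ PrevFrag w (s (G j)) (s (G (j + 3)) - s (G j))) := by
  have hLpos : ∀ i < r, 0 < L i := fun i hi ↦ by
    obtain ⟨e, he⟩ := hpow i hi
    exact he ▸ Nat.two_pow_pos e
  have hdbl : ∀ i, i + 1 < r → 2 * L i ≤ L (i + 1) := fun i hi ↦
    two_mul_le_of_lt_of_pow_two (hpow i (by omega)) (hpow (i + 1) hi) (hinc i hi)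
  have hGr : ∀ j ≤ q, G j ≤ r := fun j hj ↦
    hGq ▸ (strictMonoOn_Iic_of_lt_succ hGinc).monotoneOn hj (le_refl q) hj
  refine ⟨fun j hj ↦ ?_, fun j hj ↦ ?_⟩
  · have hG := hGinc j hj
    exact isPhrase_group hcons hdbl hLpos hG (hGr _ hj) (hph _ (hG.trans_le (hGr _ hj)))
      (happ j hj)
  · have h01 : G j < G (j + 1) := hGinc j (by omega)
    have h12 : G (j + 1) < G (j + 2) := hGinc (j + 1) (by omega)
    have h23 : G (j + 2) < G (j + 3) := hGinc (j + 2) (by omega)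
    have h3r := hGr _ hj
    exact not_prevFrag_of_two_phrases hcons h01.le (by omega) h3r (hLpos _ (by omega))
      (hinc _ (by omega)) (hnew j (by omega))

/-- Greedy grouping of a chain of consecutive phrases `h_0, …, h_{r-1}` (with starting
positions `s i` and lengths `L i` that are strictly increasing powers of two) into
groups with index boundaries `G 0 = 0 < G 1 < … < G q = r`: a phrase `h i` is appended
to the active group starting at phrase `G j` iff the fragment of length `2 · L i`
starting at `s (G j)` is a previous fragment, and a new group starts at `h (G (j+1))`
because that test failed. Then every group is a valid phrase, and no three consecutive
groups concatenate to a previous fragment. -/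
theorem statement_17 (w : List α) (r q : ℕ) (s L G : ℕ → ℕ)
    (hcons : ∀ i, i + 1 ≤ r → s (i + 1) = s i + L i)
    (hpow : ∀ i < r, ∃ e, L i = 2 ^ e)
    (hinc : ∀ i, i + 1 < r → L i < L (i + 1))
    (hph : ∀ i < r, IsPhrase w (s i) (L i))
    (hG0 : G 0 = 0) (hGq : G q = r) (hGinc : ∀ j < q, G j < G (j + 1))
    (happ : ∀ j < q, ∀ i, G j < i → i < G (j + 1) → PrevFrag w (s (G j)) (2 * L i))
    (hnew : ∀ j, j + 1 < q → ¬ PrevFrag w (s (G j)) (2 * L (G (j + 1)))) :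
    (∀ j < q, IsPhrase w (s (G j)) (s (G (j + 1)) - s (G j))) ∧
    (∀ j, j + 3 ≤ q → ¬ PrevFrag w (s (G j)) (s (G (j + 3)) - s (G j))) :=
  statement_17_general w r q s L G hcons hpow hinc hph hGq hGinc happ hnew
end
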